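/- If W satisfies the minimal constraints, W·ln W is integrable, all powers W^k for k ≥ 1 are integrable, and the purity μ of W is positive, then S[W] ≥ ln(2π/μ). -/

import Mathlib

open Real MeasureTheory

/-! The Wigner entropy dominates the collision (Rényi-2) entropy `-ln ∫ W²`, and
`ln(2π/μ) = -ln ∫ W²`. The comparison is Gibbs' inequality: integrating
`ln (W / c) ≤ W / c - 1` against `W`, with `c = ∫ W²`, gives `∫ W ln W ≤ ln c`. -/

theorem Real.mul_log_le_mul_log_add_sq_div_sub {x c : ℝ} (hx : 0 ≤ x) (hc : 0 < c) :
    x * log x ≤ x * log c + (x ^ 2 / c - x) := by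
  rcases hx.eq_or_lt with rfl | hx
  · simp
  have hlog_div : log x - log c ≤ x / c - 1 := by
    rw [← log_div hx.ne' hc.ne']
    exact log_le_sub_one_of_pos (by positivity)
  calc x * log x ≤ x * (log c + (x / c - 1)) := by gcongr; linarith
    _ = x * log c + (x ^ 2 / c - x) := by field_simp

theorem MeasureTheory.integral_mul_log_le_log_integral_sq {α : Type*} [MeasurableSpace α]
    {μ : Measure α} {f : α → ℝ} (hf : 0 ≤ᵐ[μ] f) (hf_int : Integrable f μ)
    (hf_sq : Integrable (fun x => f x ^ 2) μ)
    (hf_log : Integrable (fun x => f x * log (f x)) μ) (hf_one : ∫ x, f x ∂μ = 1)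
    (hc : 0 < ∫ x, f x ^ 2 ∂μ) :
    ∫ x, f x * log (f x) ∂μ ≤ log (∫ x, f x ^ 2 ∂μ) := by
  set c := ∫ x, f x ^ 2 ∂μ
  have hA : Integrable (fun x => f x * log c) μ := hf_int.mul_const _
  have hB : Integrable (fun x => f x ^ 2 / c) μ := hf_sq.div_const _
  have hAB : Integrable (fun x => f x ^ 2 / c - f x) μ := hB.sub hf_int
  calc ∫ x, f x * log (f x) ∂μ ≤ ∫ x, f x * log c + (f x ^ 2 / c - f x) ∂μ :=
        integral_mono_ae hf_log (hA.add hAB) <| hf.mono fun x hx =>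
          mul_log_le_mul_log_add_sq_div_sub hx hc
    _ = log c := by
        rw [integral_add hA hAB, integral_sub hB hf_int, integral_mul_const, integral_div,
          hf_one, div_self hc.ne']
        ring

theorem wigner_entropy_ge_log_two_pi_div_purity (W : ℝ × ℝ → ℝ)
    (hpos : ∀ z, 0 ≤ W z)
    (hnorm : ∫ z, W z = 1)
    (hlog : Integrable (fun z => W z * Real.log (W z)))
    (hpow : ∀ k : ℕ, 1 ≤ k → Integrable (fun z => (W z) ^ k))
    (hmu : 0 < 2 * Real.pi * ∫ z, (W z) ^ 2) :
    (-∫ z, W z * Real.log (W z))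
      ≥ Real.log (2 * Real.pi / (2 * Real.pi * ∫ z, (W z) ^ 2)) := by
  have hc : 0 < ∫ z, W z ^ 2 := pos_of_mul_pos_right hmu (by positivity)
  have hentropy := integral_mul_log_le_log_integral_sq (ae_of_all _ hpos)
    (by simpa using hpow 1 le_rfl) (hpow 2 one_le_two) hlog hnorm hc
  rw [div_mul_cancel_left₀ (by positivity), log_inv]
  linarith
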